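/- (Lemma 2.2) Consider z⁺ = F(d,z), z ∈ X ⊆ ℝⁿ, d ∈ D, with z* ∈ X, F locally bounded with bounded image, and suppose: (i) there exist M, σ > 0 and a set Ω ⊆ X such that every solution starting in Ω satisfies |z(t) − z*| ≤ M|z(0) − z*| e^{−σt} for all t ≥ 0 and all disturbance sequences; (ii) there is an integer N ≥ 1 such that for every solution and every t ≥ N there exists i(t) ∈ {0,…,N} with z(t − i(t)) ∈ Ω; (iii) there exist L ≥ 1 and a neighborhood of z* on which |F(d,z) − z*| ≤ L|z − z*| for all d ∈ D. Then z* is robustly globally exponentially stable: there exist M', σ' > 0 such that every solution from any z₀ ∈ X satisfies |z(t) − z*| ≤ M' e^{−σ' t} |z₀ − z*| for all t ≥ 0. -/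

import Mathlib

/-!
Before the trajectory first enters `Ω`, which by (ii) happens within `N` steps, its error can
grow only by a fixed factor: near `z*` by at most `L ^ N` through (iii), and away from `z*` the
bounded image caps the error by `R + ‖z*‖`, which is a fixed multiple of an initial error that is
bounded below. From the visit on, (i) gives exponential decay, and the delay of at most `N`
steps only costs a factor `exp (σ N)`.
-/

open Real

theorem le_mul_exp_of_le_of_decay_from {e : ℕ → ℝ} {C M σ : ℝ} {τ N : ℕ}
    (he : ∀ t, 0 ≤ e t) (hC : 0 ≤ C) (hσ : 0 ≤ σ) (hτN : τ ≤ N)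
    (hbefore : ∀ t ≤ τ, e t ≤ C * e 0)
    (hafter : ∀ s : ℕ, e (τ + s) ≤ M * e τ * exp (-σ * s)) (t : ℕ) :
    e t ≤ max M 1 * C * exp (σ * N) * exp (-σ * t) * e 0 := by
  have hCe : 0 ≤ C * e 0 := mul_nonneg hC (he 0)
  rcases le_or_gt τ t with hτt | htτ
  · obtain ⟨s, rfl⟩ := Nat.exists_eq_add_of_le hτt
    have hshift : exp (-σ * s) ≤ exp (σ * N) * exp (-σ * ↑(τ + s)) := by
      rw [← exp_add, exp_le_exp, Nat.cast_add]
      have : (τ : ℝ) ≤ N := by exact_mod_cast hτN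
      nlinarith
    calc e (τ + s) ≤ M * e τ * exp (-σ * s) := hafter s
      _ ≤ max M 1 * (C * e 0) * (exp (σ * N) * exp (-σ * ↑(τ + s))) := by
          gcongr
          · exact he τ
          · exact le_max_left M 1
          · exact hbefore τ le_rfl
      _ = _ := by ring
  · have hgrowth : 1 ≤ max M 1 * (exp (σ * N) * exp (-σ * t)) := by
      rw [← exp_add]
      have : (t : ℝ) ≤ N := by exact_mod_cast htτ.le.trans hτN
      exact one_le_mul_of_one_le_of_one_le (le_max_right M 1) (one_le_exp (by nlinarith))
    calc e t ≤ C * e 0 := hbefore t htτ.le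
      _ ≤ max M 1 * (exp (σ * N) * exp (-σ * t)) * (C * e 0) :=
          le_mul_of_one_le_left hCe hgrowth
      _ = _ := by ring

section Trajectory

variable {E D : Type*} {F : D → E → E} {X : Set E} {z : ℕ → E} {d : ℕ → D}

theorem trajectory_mem (hFX : ∀ d : D, ∀ x ∈ X, F d x ∈ X)
    (hz : ∀ t : ℕ, z (t + 1) = F (d t) (z t)) (hz0 : z 0 ∈ X) (t : ℕ) : z t ∈ X := by
  induction t with
  | zero => exact hz0
  | succ t ih => rw [hz t]; exact hFX _ _ ih

variable [SeminormedAddCommGroup E] {zs : E}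

theorem norm_trajectory_sub_le_pow_mul {L δ : ℝ} {N : ℕ} (hL : 1 ≤ L)
    (hloc : ∀ d : D, ∀ x ∈ X, ‖x - zs‖ < δ → ‖F d x - zs‖ ≤ L * ‖x - zs‖)
    (hX : ∀ t, z t ∈ X) (hz : ∀ t : ℕ, z (t + 1) = F (d t) (z t))
    (hnear : L ^ N * ‖z 0 - zs‖ < δ) : ∀ t ≤ N, ‖z t - zs‖ ≤ L ^ t * ‖z 0 - zs‖ := by
  intro t
  induction t with
  | zero => simp
  | succ t ih =>
    intro ht
    have ih := ih (Nat.le_of_succ_le ht)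
    have hclose : ‖z t - zs‖ < δ :=
      calc ‖z t - zs‖ ≤ L ^ t * ‖z 0 - zs‖ := ih
        _ ≤ L ^ N * ‖z 0 - zs‖ := by gcongr; exact Nat.le_of_succ_le ht
        _ < δ := hnear
    calc ‖z (t + 1) - zs‖ ≤ L * ‖z t - zs‖ := by rw [hz t]; exact hloc _ _ (hX t) hclose
      _ ≤ L * (L ^ t * ‖z 0 - zs‖) := by gcongr
      _ = L ^ (t + 1) * ‖z 0 - zs‖ := by ring

theorem norm_trajectory_sub_le_mul {L δ B : ℝ} {N : ℕ} (hL : 1 ≤ L) (hδ : 0 < δ) (hB : 0 ≤ B)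
    (hloc : ∀ d : D, ∀ x ∈ X, ‖x - zs‖ < δ → ‖F d x - zs‖ ≤ L * ‖x - zs‖)
    (hbd : ∀ d : D, ∀ x ∈ X, ‖F d x - zs‖ ≤ B)
    (hX : ∀ t, z t ∈ X) (hz : ∀ t : ℕ, z (t + 1) = F (d t) (z t)) :
    ∀ t ≤ N, ‖z t - zs‖ ≤ L ^ N * (1 + B / δ) * ‖z 0 - zs‖ := by
  intro t ht
  have hLN : 1 ≤ L ^ N := one_le_pow₀ hL
  have hfactor : 1 ≤ 1 + B / δ := le_add_of_nonneg_right (by positivity)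
  by_cases hnear : L ^ N * ‖z 0 - zs‖ < δ
  · calc ‖z t - zs‖ ≤ L ^ t * ‖z 0 - zs‖ :=
          norm_trajectory_sub_le_pow_mul hL hloc hX hz hnear t ht
      _ ≤ L ^ N * 1 * ‖z 0 - zs‖ := by rw [mul_one]; gcongr
      _ ≤ L ^ N * (1 + B / δ) * ‖z 0 - zs‖ := by gcongr
  · push Not at hnear
    cases t with
    | zero =>
      exact le_mul_of_one_le_left (norm_nonneg _) (one_le_mul_of_one_le_of_one_le hLN hfactor)
    | succ s =>
      calc ‖z (s + 1) - zs‖ ≤ B := by rw [hz s]; exact hbd _ _ (hX s)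
        _ = B / δ * δ := by field_simp
        _ ≤ B / δ * (L ^ N * ‖z 0 - zs‖) := by gcongr
        _ ≤ L ^ N * (1 + B / δ) * ‖z 0 - zs‖ := by
            have : 0 ≤ L ^ N * ‖z 0 - zs‖ := by positivity
            nlinarith

end Trajectory

theorem stmt_2_general {n : ℕ} {D : Type*}
    (X : Set (EuclideanSpace ℝ (Fin n)))
    (F : D → EuclideanSpace ℝ (Fin n) → EuclideanSpace ℝ (Fin n))
    (hFX : ∀ d : D, ∀ z ∈ X, F d z ∈ X)
    (zs : EuclideanSpace ℝ (Fin n))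
    -- bounded image
    (R : ℝ) (hR : 0 < R) (hbd : ∀ d : D, ∀ z ∈ X, ‖F d z‖ ≤ R)
    (Ω : Set (EuclideanSpace ℝ (Fin n)))
    -- (i) exponential stability from Ω
    (M σ : ℝ) (hσ : 0 < σ)
    (hi : ∀ (z : ℕ → EuclideanSpace ℝ (Fin n)) (d : ℕ → D),
      z 0 ∈ Ω → (∀ t : ℕ, z (t + 1) = F (d t) (z t)) →
      ∀ t : ℕ, ‖z t - zs‖ ≤ M * ‖z 0 - zs‖ * Real.exp (-σ * t))
    -- (ii) recurrence to Ω
    (N : ℕ)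
    (hii : ∀ (z : ℕ → EuclideanSpace ℝ (Fin n)) (d : ℕ → D),
      z 0 ∈ X → (∀ t : ℕ, z (t + 1) = F (d t) (z t)) →
      ∀ t : ℕ, N ≤ t → ∃ i ≤ N, z (t - i) ∈ Ω)
    -- (iii) local linear bound near zs
    (L δ : ℝ) (hL : 1 ≤ L) (hδ : 0 < δ)
    (hiii : ∀ d : D, ∀ z ∈ X, ‖z - zs‖ < δ → ‖F d z - zs‖ ≤ L * ‖z - zs‖) :
    ∃ M' σ' : ℝ, 0 < M' ∧ 0 < σ' ∧
      ∀ (z : ℕ → EuclideanSpace ℝ (Fin n)) (d : ℕ → D),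
        z 0 ∈ X → (∀ t : ℕ, z (t + 1) = F (d t) (z t)) →
        ∀ t : ℕ, ‖z t - zs‖ ≤ M' * Real.exp (-σ' * t) * ‖z 0 - zs‖ := by
  have hL0 : 0 < L := one_pos.trans_le hL
  have hbd' : ∀ d : D, ∀ x ∈ X, ‖F d x - zs‖ ≤ R + ‖zs‖ := fun d x hx =>
    (norm_sub_le _ _).trans (by gcongr; exact hbd d x hx)
  refine ⟨max M 1 * (L ^ N * (1 + (R + ‖zs‖) / δ)) * exp (σ * N), σ, by positivity, hσ,
    fun z d hz0 hz t => ?_⟩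
  have hX := trajectory_mem hFX hz hz0
  obtain ⟨i, -, hvisit⟩ := hii z d hz0 hz N le_rfl
  have hdecay := hi (fun s => z (N - i + s)) (fun s => d (N - i + s)) hvisit (fun s => hz _)
  exact le_mul_exp_of_le_of_decay_from (fun t => norm_nonneg _) (by positivity) hσ.le
    (Nat.sub_le N i)
    (fun t ht => norm_trajectory_sub_le_mul hL hδ (by positivity) hiii hbd' hX hz t
      (ht.trans (Nat.sub_le N i)))
    hdecay t

/-- Lemma 2.2: robust global exponential stability from exponential stability on a
recurrently-visited set Ω, finite-time recurrence, and a local linear bound. -/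
theorem stmt_2 {n : ℕ} {D : Type*} [Nonempty D]
    (X : Set (EuclideanSpace ℝ (Fin n))) (hXne : X.Nonempty) (hXcl : IsClosed X)
    (F : D → EuclideanSpace ℝ (Fin n) → EuclideanSpace ℝ (Fin n))
    (hFX : ∀ d : D, ∀ z ∈ X, F d z ∈ X)
    (zs : EuclideanSpace ℝ (Fin n)) (hzs : zs ∈ X)
    -- bounded image
    (R : ℝ) (hR : 0 < R) (hbd : ∀ d : D, ∀ z ∈ X, ‖F d z‖ ≤ R)
    (Ω : Set (EuclideanSpace ℝ (Fin n))) (hΩ : Ω ⊆ X)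
    -- (i) exponential stability from Ω
    (M σ : ℝ) (hM : 0 < M) (hσ : 0 < σ)
    (hi : ∀ (z : ℕ → EuclideanSpace ℝ (Fin n)) (d : ℕ → D),
      z 0 ∈ Ω → (∀ t : ℕ, z (t + 1) = F (d t) (z t)) →
      ∀ t : ℕ, ‖z t - zs‖ ≤ M * ‖z 0 - zs‖ * Real.exp (-σ * t))
    -- (ii) recurrence to Ω
    (N : ℕ) (hN : 1 ≤ N)
    (hii : ∀ (z : ℕ → EuclideanSpace ℝ (Fin n)) (d : ℕ → D),
      z 0 ∈ X → (∀ t : ℕ, z (t + 1) = F (d t) (z t)) →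
      ∀ t : ℕ, N ≤ t → ∃ i ≤ N, z (t - i) ∈ Ω)
    -- (iii) local linear bound near zs
    (L δ : ℝ) (hL : 1 ≤ L) (hδ : 0 < δ)
    (hiii : ∀ d : D, ∀ z ∈ X, ‖z - zs‖ < δ → ‖F d z - zs‖ ≤ L * ‖z - zs‖) :
    ∃ M' σ' : ℝ, 0 < M' ∧ 0 < σ' ∧
      ∀ (z : ℕ → EuclideanSpace ℝ (Fin n)) (d : ℕ → D),
        z 0 ∈ X → (∀ t : ℕ, z (t + 1) = F (d t) (z t)) →
        ∀ t : ℕ, ‖z t - zs‖ ≤ M' * Real.exp (-σ' * t) * ‖z 0 - zs‖ :=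
  stmt_2_general X F hFX zs R hR hbd Ω M σ hσ hi N hii L δ hL hδ hiii
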